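/- Let f ≥ 1 be an integer and consider functions x : ZMod f → {0, 1} and y : ZMod f → ℝ with 0 ≤ y(β) ≤ 1 for all β. Assume: (i) x is not identically 0; (ii) for every β, if x(β) = 1 then y(β - 1) = 0; (iii) for every β, if x(β) = 0 and y(β + 1) < 1 then y(β) = 0. Then for every β with x(β) = 0 one has y(β) = 0. -/

import Mathlib

/-! Given β with x β = 0, pick γ with x γ = 1 and walk from β forward to γ. If x (β + 1) = 1,
hypothesis (ii) at β + 1 gives y β = 0; otherwise by induction on the distance y (β + 1) = 0 < 1,
and hypothesis (iii) gives y β = 0. Cyclicity of `ZMod f` (f ≥ 1) makes every γ reachable from β. -/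

theorem eq_zero_of_add_natCast_add_one_mem {G R : Type*} [AddCommGroupWithOne G]
    [Zero R] [One R] [PartialOrder R] [ZeroLEOneClass R] [NeZero (1 : R)]
    (D : Set G) (y : G → R)
    (hD : ∀ β ∈ D, y (β - 1) = 0)
    (hDc : ∀ β ∉ D, y (β + 1) < 1 → y β = 0) :
    ∀ (n : ℕ) (β : G), β + (n + 1) ∈ D → β ∉ D → y β = 0 := by
  intro n
  induction n with
  | zero =>
    intro β hβD _
    simpa using hD (β + 1) (by simpa using hβD)
  | succ n ih =>
    intro β hβD hβ
    by_cases hβ1 : β + 1 ∈ D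
    · simpa using hD (β + 1) hβ1
    · have hy1 : y (β + 1) = 0 :=
        ih (β + 1) (by convert hβD using 1; push_cast; abel) hβ1
      exact hDc β hβ (hy1 ▸ zero_lt_one)

theorem ZMod.exists_eq_add_natCast_add_one {f : ℕ} [NeZero f] (β γ : ZMod f) :
    ∃ n : ℕ, γ = β + (n + 1) :=
  ⟨(γ - β - 1).val, by rw [ZMod.natCast_zmod_val]; abel⟩

theorem stmt_9_general (f : ℕ) (hf : 1 ≤ f)
    (x : ZMod f → ℕ) (hx01 : ∀ β, x β = 0 ∨ x β = 1)
    (y : ZMod f → ℝ)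
    (hne : ¬ ∀ β, x β = 0)
    (h2 : ∀ β, x β = 1 → y (β - 1) = 0)
    (h3 : ∀ β, x β = 0 → y (β + 1) < 1 → y β = 0) :
    ∀ β, x β = 0 → y β = 0 := by
  have : NeZero f := ⟨by omega⟩
  have hx0 : ∀ β, β ∉ {β | x β = 1} ↔ x β = 0 := fun β => by
    rcases hx01 β with h | h <;> simp [h]
  intro β hβ
  obtain ⟨γ, hγ⟩ : ∃ γ, x γ = 1 :=
    (not_forall.1 hne).imp fun γ hγ => (hx01 γ).resolve_left hγ
  obtain ⟨n, rfl⟩ := ZMod.exists_eq_add_natCast_add_one β γ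
  exact eq_zero_of_add_natCast_add_one_mem {β | x β = 1} y h2
    (fun β hβ => h3 β ((hx0 β).1 hβ)) n β hγ ((hx0 β).2 hβ)

theorem stmt_9 (f : ℕ) (hf : 1 ≤ f)
    (x : ZMod f → ℕ) (hx01 : ∀ β, x β = 0 ∨ x β = 1)
    (y : ZMod f → ℝ) (hy : ∀ β, 0 ≤ y β ∧ y β ≤ 1)
    (hne : ¬ ∀ β, x β = 0)
    (h2 : ∀ β, x β = 1 → y (β - 1) = 0)
    (h3 : ∀ β, x β = 0 → y (β + 1) < 1 → y β = 0) :
    ∀ β, x β = 0 → y β = 0 :=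
  stmt_9_general f hf x hx01 y hne h2 h3
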